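/- arXiv:2503.21348 — 5 statements merged into one kernel-verified Lean document; each statement's English description precedes it below -/
import Mathlib

section
/- Let M be a closed 2-connected manifold (path-connected with trivial fundamental group and trivial second homotopy group) and let f : M → M be a fixed-point-free continuous involution. Then the twisted path space P_f M is simply connected (in particular path-connected with trivial fundamental group). -/
/-!
A map from the boundary of the cube `I^k` into `P = P_f M` is a map `∂I^k × I → M` twisted
by `f`. Extend its restriction to `∂I^k × {0}` over `I^k` by some `g`; then `g` and `f ∘ g`
prescribe the two missing faces of `I^k × I`, and an extension of the resulting map over
`I^k × I` is an extension of the original map into `P`. So maps `∂I^k → P` extend as soon as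
maps `∂I^k → M` and `∂I^{k+1} → M` do. For `k = 1` this gives path-connectedness of `P`, and
for `k = 2` that any two paths in `P` are homotopic.

Maps `∂I^{n+1} → M` extend when `π_n(M)` vanishes. Identify `I^{n+1}` with the unit ball of
`ℝ × ℝ^n` (sup norm). Normalising `v ↦ (1 - 2‖v‖, (1 - ‖v‖) • v)` maps the unit ball of
`ℝ^n` onto the unit sphere of `ℝ × ℝ^n`, collapsing exactly the unit sphere of `ℝ^n` to the
south pole. A sphere map composed with it is a generalized loop; its null-homotopy rel boundary
descends to a null-homotopy of the sphere map, which then extends over the ball as the cone on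
the sphere.
-/

open unitInterval Metric Set Topology

noncomputable section

namespace TwistedPathSpace

section CubeBall

variable {ι : Type*}

def cubeToBall (y : ι → I) : ι → ℝ := fun i => 2 * (y i : ℝ) - 1

def ballToCube (v : ι → ℝ) : ι → I := fun i => projIcc 0 1 zero_le_one ((v i + 1) / 2)

@[fun_prop]
theorem continuous_cubeToBall : Continuous (cubeToBall : (ι → I) → ι → ℝ) := by
  unfold cubeToBall; fun_prop

@[fun_prop]
theorem continuous_ballToCube : Continuous (ballToCube : (ι → ℝ) → ι → I) := by
  unfold ballToCube; fun_prop

theorem abs_two_mul_sub_one_le (t : I) : |2 * (t : ℝ) - 1| ≤ 1 := by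
  rw [abs_le]; constructor <;> linarith [t.2.1, t.2.2]

theorem abs_two_mul_sub_one_eq_one_iff (t : I) : |2 * (t : ℝ) - 1| = 1 ↔ t = 0 ∨ t = 1 := by
  rw [abs_eq zero_le_one, ← Subtype.coe_inj, ← Subtype.coe_inj, Icc.coe_zero, Icc.coe_one]
  constructor <;> rintro (h | h) <;> [right; left; right; left] <;> linarith

theorem norm_cubeToBall_le_one [Fintype ι] (y : ι → I) : ‖cubeToBall y‖ ≤ 1 :=
  (pi_norm_le_iff_of_nonneg zero_le_one).2 fun i => abs_two_mul_sub_one_le (y i)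

theorem norm_cubeToBall_eq_one_iff [Fintype ι] {y : ι → I} :
    ‖cubeToBall y‖ = 1 ↔ y ∈ Cube.boundary ι := by
  constructor
  · intro h
    by_contra hy
    have : ∀ i, ‖cubeToBall y i‖ < 1 := fun i =>
      (abs_two_mul_sub_one_le (y i)).lt_of_ne fun h' =>
        hy ⟨i, (abs_two_mul_sub_one_eq_one_iff (y i)).1 h'⟩
    exact ((pi_norm_lt_iff one_pos).2 this).ne h
  · rintro ⟨i, hi⟩
    refine le_antisymm (norm_cubeToBall_le_one y) ?_
    calc (1 : ℝ) = ‖cubeToBall y i‖ := ((abs_two_mul_sub_one_eq_one_iff (y i)).2 hi).symm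
      _ ≤ ‖cubeToBall y‖ := norm_le_pi_norm _ i

theorem ballToCube_cubeToBall (y : ι → I) : ballToCube (cubeToBall y) = y := by
  funext i
  simp only [ballToCube, cubeToBall, show (2 * (y i : ℝ) - 1 + 1) / 2 = y i by ring]
  exact projIcc_val zero_le_one (y i)

theorem cubeToBall_ballToCube [Fintype ι] {v : ι → ℝ} (hv : ‖v‖ ≤ 1) :
    cubeToBall (ballToCube v) = v := by
  funext i
  have hi := abs_le.1 ((norm_le_pi_norm v i).trans hv)
  simp only [cubeToBall, ballToCube]
  rw [projIcc_of_mem zero_le_one ⟨by linarith [hi.1], by linarith [hi.2]⟩]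
  ring

theorem ballToCube_mem_boundary [Fintype ι] {v : ι → ℝ} (hv : ‖v‖ = 1) :
    ballToCube v ∈ Cube.boundary ι := by
  rw [← norm_cubeToBall_eq_one_iff, cubeToBall_ballToCube hv.le, hv]

theorem norm_eq_max_norm_zero_tail {n : ℕ} (v : Fin (n + 1) → ℝ) :
    ‖v‖ = max ‖v 0‖ ‖Fin.tail v‖ := by
  refine le_antisymm ((pi_norm_le_iff_of_nonneg (le_max_of_le_left (norm_nonneg _))).2 ?_)
    (max_le (norm_le_pi_norm v 0)
      ((pi_norm_le_iff_of_nonneg (norm_nonneg _)).2 fun j => norm_le_pi_norm v j.succ))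
  exact Fin.cases (le_max_left _ _) fun j =>
    (norm_le_pi_norm (Fin.tail v) j).trans (le_max_right _ _)

end CubeBall

section BallToSphere

/-- `ρ ↦ (1 - 2ρ, (1 - ρ)ρ)` records the height and the horizontal norm of
`ballToSphereDir v` for `‖v‖ = ρ`; up to positive scaling it determines `ρ ∈ [0, 1)`. -/
theorem eq_of_profile_eq_smul {ρ ρ' c : ℝ} (hρ : ρ ∈ Icc 0 1) (hρ' : ρ' ∈ Icc 0 1)
    (hc : 0 < c) (h₁ : 1 - 2 * ρ = c * (1 - 2 * ρ')) (h₂ : (1 - ρ) * ρ = c * ((1 - ρ') * ρ')) :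
    ρ = ρ' ∧ (ρ = 1 ∨ c = 1) := by
  obtain ⟨hρ0, hρ1⟩ := hρ
  obtain ⟨hρ0', hρ1'⟩ := hρ'
  have key : (ρ' - ρ) * (ρ * ρ' + (1 - ρ) * (1 - ρ')) = 0 := by
    linear_combination (1 - ρ') * ρ' * h₁ - (1 - 2 * ρ') * h₂
  rcases mul_eq_zero.1 key with hρρ | hsum
  · obtain rfl : ρ = ρ' := by linarith
    refine ⟨rfl, or_iff_not_imp_left.2 fun hρ1'' => ?_⟩
    by_contra hc1
    have h₁' : (1 - c) * (1 - 2 * ρ) = 0 := by linear_combination h₁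
    have h₂' : (1 - c) * ((1 - ρ) * ρ) = 0 := by linear_combination h₂
    have hc1' : 1 - c ≠ 0 := sub_ne_zero.2 (Ne.symm hc1)
    have := (mul_eq_zero.1 h₁').resolve_left hc1'
    rcases mul_eq_zero.1 ((mul_eq_zero.1 h₂').resolve_left hc1') with h | h <;> linarith
  · have h₃ : ρ * ρ' = 0 := by
      nlinarith [mul_nonneg hρ0 hρ0', mul_nonneg (sub_nonneg.2 hρ1) (sub_nonneg.2 hρ1')]
    have h₄ : (1 - ρ) * (1 - ρ') = 0 := by linarith
    exfalso
    rcases mul_eq_zero.1 h₃ with h₅ | h₅ <;> rcases mul_eq_zero.1 h₄ with h₆ | h₆ <;>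
      nlinarith

theorem exists_profile_parallel (h : ℝ) {w : ℝ} (hw : 0 < w) :
    ∃ ρ ∈ Ioo (0 : ℝ) 1, (1 - 2 * ρ) * w = (1 - ρ) * ρ * h := by
  let φ (ρ : ℝ) : ℝ := (1 - 2 * ρ) * w - (1 - ρ) * ρ * h
  have hφ0 : φ 0 = w := by simp only [φ]; ring
  have hφ1 : φ 1 = -w := by simp only [φ]; ring
  obtain ⟨ρ, ⟨hρ0, hρ1⟩, hφρ⟩ :=
    intermediate_value_Icc' zero_le_one (by fun_prop : ContinuousOn φ (Icc 0 1))
      (show (0 : ℝ) ∈ Icc (φ 1) (φ 0) by rw [hφ0, hφ1, mem_Icc]; constructor <;> linarith)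
  refine ⟨ρ, ⟨hρ0.lt_of_ne ?_, hρ1.lt_of_ne ?_⟩, sub_eq_zero.1 hφρ⟩ <;> rintro rfl <;>
    linarith

variable {E : Type*} [NormedAddCommGroup E] [NormedSpace ℝ E]

def ballToSphereDir (v : E) : ℝ × E := (1 - 2 * ‖v‖, (1 - ‖v‖) • v)

def ballToSphere (v : E) : ℝ × E := ‖ballToSphereDir v‖⁻¹ • ballToSphereDir v

theorem ballToSphereDir_ne_zero (v : E) : ballToSphereDir v ≠ 0 := by
  intro h
  have h1 : 1 - 2 * ‖v‖ = 0 := congrArg Prod.fst h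
  rcases smul_eq_zero.1 (congrArg Prod.snd h) with h2 | h2
  · linarith
  · rw [h2, norm_zero] at h1; norm_num at h1

theorem norm_ballToSphere (v : E) : ‖ballToSphere v‖ = 1 :=
  norm_smul_inv_norm (ballToSphereDir_ne_zero v)

@[fun_prop]
theorem continuous_ballToSphere : Continuous (ballToSphere : E → ℝ × E) := by
  have hdir : Continuous (ballToSphereDir : E → ℝ × E) := by unfold ballToSphereDir; fun_prop
  exact (hdir.norm.inv₀ fun v => norm_ne_zero_iff.2 (ballToSphereDir_ne_zero v)).smul hdir

theorem ballToSphere_of_norm_eq_one {v : E} (hv : ‖v‖ = 1) : ballToSphere v = (-1, 0) := by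
  norm_num [ballToSphere, ballToSphereDir, hv, Prod.norm_def]

theorem eq_or_norm_eq_one_of_ballToSphere_eq {v v' : E} (hv : ‖v‖ ≤ 1) (hv' : ‖v'‖ ≤ 1)
    (h : ballToSphere v = ballToSphere v') : v = v' ∨ ‖v‖ = 1 ∧ ‖v'‖ = 1 := by
  obtain ⟨c, hc, hd⟩ := ((sameRay_iff_inv_norm_smul_eq_of_ne (ballToSphereDir_ne_zero v)
    (ballToSphereDir_ne_zero v')).2 h).exists_pos_right (ballToSphereDir_ne_zero v)
    (ballToSphereDir_ne_zero v')
  have hsnd : (1 - ‖v‖) • v = c • (1 - ‖v'‖) • v' := congrArg Prod.snd hd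
  have hnorm : (1 - ‖v‖) * ‖v‖ = c * ((1 - ‖v'‖) * ‖v'‖) := by
    simpa [norm_smul, abs_of_nonneg (sub_nonneg.2 hv), abs_of_nonneg (sub_nonneg.2 hv'),
      abs_of_pos hc] using congrArg norm hsnd
  obtain ⟨hρ, hv1 | rfl⟩ := eq_of_profile_eq_smul ⟨norm_nonneg v, hv⟩ ⟨norm_nonneg v', hv'⟩
    hc (congrArg Prod.fst hd) hnorm
  · exact Or.inr ⟨hv1, hρ ▸ hv1⟩
  rcases hv.eq_or_lt with hv1 | hv1
  · exact Or.inr ⟨hv1, hρ ▸ hv1⟩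
  rw [one_smul, ← hρ] at hsnd
  exact Or.inl (smul_right_injective E (by linarith : (1 : ℝ) - ‖v‖ ≠ 0) hsnd)

theorem exists_ballToSphere_eq [Nontrivial E] {p : ℝ × E} (hp : ‖p‖ = 1) :
    ∃ v : E, ‖v‖ ≤ 1 ∧ ballToSphere v = p := by
  obtain ⟨h, u⟩ := p
  rcases eq_or_ne u 0 with rfl | hu
  · have hh : |h| = 1 := by simpa [Prod.norm_def] using hp
    rcases (abs_eq zero_le_one).1 hh with rfl | rfl
    · exact ⟨0, by simp, by simp [ballToSphere, ballToSphereDir, Prod.norm_def]⟩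
    · obtain ⟨v, hv⟩ := exists_norm_eq E zero_le_one
      exact ⟨v, hv.le, ballToSphere_of_norm_eq_one hv⟩
  have hu' : 0 < ‖u‖ := norm_pos_iff.2 hu
  obtain ⟨ρ, ⟨hρ0, hρ1⟩, hρ⟩ := exists_profile_parallel h hu'
  have hnorm : ‖(ρ / ‖u‖) • u‖ = ρ := by
    rw [norm_smul, Real.norm_of_nonneg (by positivity), div_mul_cancel₀ _ hu'.ne']
  have hk : 0 < (1 - ρ) * ρ / ‖u‖ := by have := sub_pos.2 hρ1; positivity
  have hdir : ballToSphereDir ((ρ / ‖u‖) • u) = ((1 - ρ) * ρ / ‖u‖) • (h, u) := by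
    simp only [ballToSphereDir, hnorm, Prod.smul_mk, smul_smul, smul_eq_mul]
    congr 1
    · field_simp; linarith
    · congr 1; ring
  refine ⟨(ρ / ‖u‖) • u, hnorm.trans_le hρ1.le, ?_⟩
  rw [ballToSphere, hdir, norm_smul, hp, Real.norm_of_nonneg hk.le, mul_one, smul_smul,
    inv_mul_cancel₀ hk.ne', one_smul]

end BallToSphere

section Nullhomotopy

variable {M : Type*} [TopologicalSpace M]

theorem exists_extension_closedBall_of_nullhomotopic {F : Type*} [NormedAddCommGroup F]
    [NormedSpace ℝ F] [ProperSpace F] [Nontrivial F] {f : C(sphere (0 : F) 1, M)}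
    (hf : f.Nullhomotopic) :
    ∃ g : C(closedBall (0 : F) 1, M),
      ∀ p : sphere (0 : F) 1, g (inclusion sphere_subset_closedBall p) = f p := by
  obtain ⟨x, ⟨H⟩⟩ := hf
  have hcone (r : I) (p : sphere (0 : F) 1) : ‖(1 - (r : ℝ)) • (p : F)‖ = 1 - r := by
    rw [norm_smul, norm_eq_of_mem_sphere p, mul_one, Real.norm_of_nonneg (sub_nonneg.2 r.2.2)]
  let cone : C(I × sphere (0 : F) 1, closedBall (0 : F) 1) :=
    ⟨fun q => ⟨(1 - (q.1 : ℝ)) • (q.2 : F), by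
      rw [mem_closedBall_zero_iff, hcone]; linarith [q.1.2.1]⟩, by fun_prop⟩
  have hsurj : Function.Surjective cone := by
    rintro ⟨y, hy⟩
    rcases eq_or_ne y 0 with rfl | hy0
    · obtain ⟨p, hp⟩ := (NormedSpace.sphere_nonempty (x := (0 : F))).2 zero_le_one
      exact ⟨(1, ⟨p, hp⟩), Subtype.ext (by simp [cone])⟩
    · have hy' := norm_pos_iff.2 hy0
      refine ⟨(⟨1 - ‖y‖, by linarith [mem_closedBall_zero_iff.1 hy], by linarith⟩,
        ⟨‖y‖⁻¹ • y, mem_sphere_zero_iff_norm.2 (norm_smul_inv_norm hy0)⟩),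
        Subtype.ext ?_⟩
      simp only [cone, ContinuousMap.coe_mk, sub_sub_cancel, smul_smul,
        mul_inv_cancel₀ hy'.ne', one_smul]
  have hfac : Function.FactorsThrough H cone := by
    rintro ⟨r, p⟩ ⟨r', p'⟩ h
    have hval : (1 - (r : ℝ)) • (p : F) = (1 - (r' : ℝ)) • (p' : F) :=
      congrArg Subtype.val h
    obtain rfl : r = r' :=
      Subtype.ext (by linarith [congrArg norm hval, hcone r p, hcone r' p'])
    rcases eq_or_ne r 1 with rfl | hr1
    · simp
    · have : (1 : ℝ) - r ≠ 0 := sub_ne_zero.2 fun h => hr1 (Subtype.ext h.symm)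
      rw [Subtype.ext (smul_right_injective F this hval)]
  have hq := Topology.IsQuotientMap.of_surjective_continuous hsurj cone.continuous
  refine ⟨hq.lift H.toContinuousMap hfac, fun p => ?_⟩
  have hcone0 : cone (0, p) = inclusion sphere_subset_closedBall p := Subtype.ext (by simp [cone])
  rw [← hcone0, ← ContinuousMap.comp_apply, hq.lift_comp]
  simp

theorem nullhomotopic_of_homotopicRel_comp {X S : Type*} [TopologicalSpace X] [CompactSpace X]
    [TopologicalSpace S] [T2Space S] {q : C(X, S)} (hq : Function.Surjective q) {B : Set X}
    (hB : ∀ a b, q a = q b → a = b ∨ a ∈ B ∧ b ∈ B) {f : C(S, M)} {x : M}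
    (h : (f.comp q).HomotopicRel (ContinuousMap.const X x) B) : f.Nullhomotopic := by
  obtain ⟨H⟩ := h
  let Q : C(I × X, I × S) := (ContinuousMap.id I).prodMap q
  have hfac : Function.FactorsThrough H Q := by
    rintro ⟨r, a⟩ ⟨r', b⟩ hab
    obtain ⟨rfl, hqab⟩ := Prod.ext_iff.1 hab
    rcases hB a b hqab with rfl | ⟨ha, hb⟩
    · rfl
    · simp only [H.eq_fst _ ha, H.eq_fst _ hb, ContinuousMap.comp_apply]
      exact congrArg f hqab
  have hquot := Topology.IsQuotientMap.of_surjective_continuous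
    (Function.surjective_id.prodMap hq) Q.continuous
  have hK (z : I × X) : hquot.lift H.toContinuousMap hfac (Q z) = H z :=
    DFunLike.congr_fun (hquot.lift_comp H.toContinuousMap hfac) z
  refine ⟨x, ⟨{ toContinuousMap := hquot.lift H.toContinuousMap hfac,
                map_zero_left := fun s => ?_, map_one_left := fun s => ?_ }⟩⟩
  · obtain ⟨a, rfl⟩ := hq s
    simpa [Q] using hK (0, a)
  · obtain ⟨a, rfl⟩ := hq s
    simpa [Q] using hK (1, a)

variable {ι : Type*} [Fintype ι]

def cubeToSphere : C(ι → I, sphere (0 : ℝ × (ι → ℝ)) 1) :=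
  ⟨fun y => ⟨ballToSphere (cubeToBall y), mem_sphere_zero_iff_norm.2 (norm_ballToSphere _)⟩,
    by fun_prop⟩

theorem cubeToSphere_of_mem_boundary {y : ι → I} (hy : y ∈ Cube.boundary ι) :
    (cubeToSphere y : ℝ × (ι → ℝ)) = (-1, 0) :=
  ballToSphere_of_norm_eq_one (norm_cubeToBall_eq_one_iff.2 hy)

theorem cubeToSphere_surjective [Nonempty ι] : Function.Surjective (cubeToSphere (ι := ι)) := by
  rintro ⟨p, hp⟩
  obtain ⟨v, hv, rfl⟩ := exists_ballToSphere_eq (mem_sphere_zero_iff_norm.1 hp)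
  exact ⟨ballToCube v, Subtype.ext (by simp [cubeToSphere, cubeToBall_ballToCube hv])⟩

theorem eq_or_mem_boundary_of_cubeToSphere_eq {a b : ι → I}
    (h : cubeToSphere a = cubeToSphere b) :
    a = b ∨ a ∈ Cube.boundary ι ∧ b ∈ Cube.boundary ι := by
  rcases eq_or_norm_eq_one_of_ballToSphere_eq (norm_cubeToBall_le_one a)
    (norm_cubeToBall_le_one b) (congrArg Subtype.val h) with h | ⟨ha, hb⟩
  · rw [← ballToCube_cubeToBall a, h, ballToCube_cubeToBall]
    exact Or.inl rfl
  · exact Or.inr ⟨norm_cubeToBall_eq_one_iff.1 ha, norm_cubeToBall_eq_one_iff.1 hb⟩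

open Topology.Homotopy in
theorem nullhomotopic_of_subsingleton_homotopyGroup [Nonempty ι]
    (hπ : ∀ x : M, Subsingleton (HomotopyGroup ι M x))
    (f : C(sphere (0 : ℝ × (ι → ℝ)) 1, M)) : f.Nullhomotopic := by
  let x := f ⟨(-1, 0), by simp [Prod.norm_def]⟩
  let p : Ω^ ι M x := ⟨f.comp cubeToSphere, fun y hy => by
    simp [x, ← cubeToSphere_of_mem_boundary hy]⟩
  exact nullhomotopic_of_homotopicRel_comp cubeToSphere_surjective
    (fun _ _ => eq_or_mem_boundary_of_cubeToSphere_eq)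
    (Quotient.exact (@Subsingleton.elim (HomotopyGroup ι M x) (hπ x) ⟦p⟧ ⟦GenLoop.const⟧))

end Nullhomotopy

theorem isClosed_setOf_apply_eq {ι : Type*} (i : ι) (t : I) : IsClosed {y : ι → I | y i = t} :=
  isClosed_eq (continuous_apply i) continuous_const

theorem isClosed_cube_boundary (ι : Type*) [Finite ι] : IsClosed (Cube.boundary ι) := by
  have : Cube.boundary ι = ⋃ i, ({y | y i = 0} ∪ {y | y i = 1}) := by
    ext y; simp [Cube.boundary]
  rw [this]
  exact isClosed_iUnion_of_finite fun i =>
    (isClosed_setOf_apply_eq i 0).union (isClosed_setOf_apply_eq i 1)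

theorem mem_cube_boundary_succ_iff {n : ℕ} {y : Fin (n + 1) → I} :
    y ∈ Cube.boundary (Fin (n + 1)) ↔
      (y 0 = 0 ∨ y 0 = 1) ∨ Fin.tail y ∈ Cube.boundary (Fin n) := by
  simp [Cube.boundary, Fin.exists_fin_succ, Fin.tail]

def ExtendsFromCubeBoundary (n : ℕ) (X : Type*) [TopologicalSpace X] : Prop :=
  ∀ F : (Fin n → I) → X, ContinuousOn F (Cube.boundary (Fin n)) →
    ∃ E : C(Fin n → I, X), EqOn E F (Cube.boundary (Fin n))

section Extension

variable {X : Type*} [TopologicalSpace X]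

theorem extendsFromCubeBoundary_succ {n : ℕ} [NeZero n]
    (hπ : ∀ x : X, Subsingleton (HomotopyGroup (Fin n) X x)) :
    ExtendsFromCubeBoundary (n + 1) X := by
  intro F hF
  have hnorm (v : Fin (n + 1) → ℝ) : ‖(v 0, Fin.tail v)‖ = ‖v‖ := by
    rw [Prod.norm_def, norm_eq_max_norm_zero_tail]
  let toBall (y : Fin (n + 1) → I) : ℝ × (Fin n → ℝ) :=
    (cubeToBall y 0, Fin.tail (cubeToBall y))
  let ofBall (p : ℝ × (Fin n → ℝ)) : Fin (n + 1) → I := ballToCube (Fin.cons p.1 p.2)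
  have hofBall (p : sphere (0 : ℝ × (Fin n → ℝ)) 1) :
      ofBall p ∈ Cube.boundary (Fin (n + 1)) :=
    ballToCube_mem_boundary (by
      rw [← hnorm, Fin.cons_zero, Fin.tail_cons, ← mem_sphere_zero_iff_norm]; exact p.2)
  let f : C(sphere (0 : ℝ × (Fin n → ℝ)) 1, X) :=
    ⟨fun p => F (ofBall p), hF.comp_continuous (by fun_prop) hofBall⟩
  obtain ⟨g, hg⟩ := exists_extension_closedBall_of_nullhomotopic
    (nullhomotopic_of_subsingleton_homotopyGroup hπ f)
  have htoBall (y : Fin (n + 1) → I) : toBall y ∈ closedBall 0 1 := by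
    rw [mem_closedBall_zero_iff, hnorm]; exact norm_cubeToBall_le_one y
  refine ⟨⟨fun y => g ⟨toBall y, htoBall y⟩, by fun_prop⟩, fun y hy => ?_⟩
  have hsphere : toBall y ∈ sphere 0 1 := by
    rw [mem_sphere_zero_iff_norm, hnorm]; exact norm_cubeToBall_eq_one_iff.2 hy
  have hy' : ofBall (toBall y) = y := by simp [ofBall, toBall, ballToCube_cubeToBall]
  simpa [f, hy'] using hg ⟨toBall y, hsphere⟩

theorem extendsFromCubeBoundary_one [PathConnectedSpace X] : ExtendsFromCubeBoundary 1 X := by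
  intro F _
  let γ := PathConnectedSpace.somePath (F fun _ => 0) (F fun _ => 1)
  refine ⟨⟨fun y => γ (y 0), by fun_prop⟩, fun y ⟨i, hi⟩ => ?_⟩
  obtain rfl := Subsingleton.elim i 0
  have hy (t : I) (ht : y 0 = t) : y = fun _ => t := funext fun j => by rwa [Subsingleton.elim j 0]
  rcases hi with h | h <;> simp [hy _ h, γ]

theorem ExtendsFromCubeBoundary.joined (h : ExtendsFromCubeBoundary 1 X) (a b : X) :
    Joined a b := by
  classical
  let F (y : Fin 1 → I) : X := if y 0 = 0 then a else b
  have hF : ContinuousOn F (Cube.boundary (Fin 1)) := by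
    have h0 : ContinuousOn F {y | y 0 = 0} := continuousOn_const.congr fun y hy => if_pos hy
    have h1 : ContinuousOn F {y | y 0 = 1} :=
      (continuousOn_const (c := b)).congr fun y (hy : y 0 = 1) => by simp [F, hy]
    refine (h0.union_of_isClosed h1 (isClosed_setOf_apply_eq 0 0)
      (isClosed_setOf_apply_eq 0 1)).mono fun y ⟨i, hi⟩ => ?_
    rwa [Subsingleton.elim i 0] at hi
  obtain ⟨E, hE⟩ := h F hF
  exact ⟨⟨⟨fun t => E fun _ => t, by fun_prop⟩,
    by simp [hE (show (fun _ => 0 : Fin 1 → I) ∈ _ from ⟨0, Or.inl rfl⟩), F],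
    by simp [hE (show (fun _ => 1 : Fin 1 → I) ∈ _ from ⟨0, Or.inr rfl⟩), F]⟩⟩

theorem ExtendsFromCubeBoundary.homotopic (h : ExtendsFromCubeBoundary 2 X) {a b : X}
    (p q : Path a b) : p.Homotopic q := by
  classical
  let F (y : Fin 2 → I) : X := if y 0 = 1 then q (y 1) else p (y 1)
  have hpq (s : I) (hs : s = 0 ∨ s = 1) : q s = p s := by rcases hs with rfl | rfl <;> simp
  let S : Set (Fin 2 → I) := {y | y 0 = 0} ∪ ({y | y 1 = 0} ∪ {y | y 1 = 1})
  have hF : ContinuousOn F (Cube.boundary (Fin 2)) := by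
    have hq : ContinuousOn F {y | y 0 = 1} :=
      (q.continuous.comp (continuous_apply 1)).continuousOn.congr fun y hy => if_pos hy
    have hp : ContinuousOn F S := by
      refine (p.continuous.comp (continuous_apply 1)).continuousOn.congr fun y hy => ?_
      simp only [F, Function.comp_apply]
      split_ifs with h1
      · refine hpq _ (hy.resolve_left ?_)
        simp only [mem_ofPred_eq, h1]; exact one_ne_zero
      · rfl
    refine (hq.union_of_isClosed hp (isClosed_setOf_apply_eq 0 1)
      ((isClosed_setOf_apply_eq 0 0).union
        ((isClosed_setOf_apply_eq 1 0).union (isClosed_setOf_apply_eq 1 1)))).mono ?_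
    rintro y ⟨i, hi⟩
    simp only [S, mem_union, mem_ofPred_eq]
    fin_cases i <;> simp only [Fin.zero_eta, Fin.mk_one] at hi <;> tauto
  obtain ⟨E, hE⟩ := h F hF
  have hE' (u s : I) (h : ![u, s] ∈ Cube.boundary (Fin 2)) :
      E ![u, s] = if u = 1 then q s else p s :=
    hE h
  exact ⟨{ toFun := fun z => E ![z.1, z.2]
           continuous_toFun := by fun_prop
           map_zero_left := fun s => by simp [hE' 0 s ⟨0, Or.inl rfl⟩]
           map_one_left := fun s => by simp [hE' 1 s ⟨0, Or.inr rfl⟩]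
           prop' := fun u s hs => by
             rcases hs with rfl | rfl
             · simp [hE' u 0 ⟨1, Or.inl rfl⟩]
             · simp [hE' u 1 ⟨1, Or.inr rfl⟩] }⟩

end Extension

section TwistedPaths

variable {M : Type*} [TopologicalSpace M] (f : C(M, M))

abbrev TwistedPaths := {γ : C(I, M) // γ 1 = f (γ 0)}

variable {f} {k : ℕ}

open Classical in
def twistedBoundaryMap (g : (Fin k → I) → M) (Φ : (Fin k → I) → TwistedPaths f)
    (y : Fin (k + 1) → I) : M :=
  if y 0 = 0 then g (Fin.tail y) else if y 0 = 1 then f (g (Fin.tail y))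
  else (Φ (Fin.tail y)).1 (y 0)

variable {g : (Fin k → I) → M} {Φ : (Fin k → I) → TwistedPaths f}

theorem twistedBoundaryMap_of_zero {y : Fin (k + 1) → I} (hy : y 0 = 0) :
    twistedBoundaryMap g Φ y = g (Fin.tail y) :=
  if_pos hy

theorem twistedBoundaryMap_of_one {y : Fin (k + 1) → I} (hy : y 0 = 1) :
    twistedBoundaryMap g Φ y = f (g (Fin.tail y)) := by
  simp [twistedBoundaryMap, hy]

theorem twistedBoundaryMap_of_tail_mem (hg : EqOn g (fun z => (Φ z).1 0) (Cube.boundary (Fin k)))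
    {y : Fin (k + 1) → I} (hy : Fin.tail y ∈ Cube.boundary (Fin k)) :
    twistedBoundaryMap g Φ y = (Φ (Fin.tail y)).1 (y 0) := by
  simp only [twistedBoundaryMap]
  split_ifs with h0 h1
  · rw [hg hy, h0]
  · rw [hg hy, h1, (Φ _).2]
  · rfl

theorem continuousOn_twistedBoundaryMap (hgc : Continuous g)
    (hg : EqOn g (fun z => (Φ z).1 0) (Cube.boundary (Fin k)))
    (hΦ : ContinuousOn Φ (Cube.boundary (Fin k))) :
    ContinuousOn (twistedBoundaryMap g Φ) (Cube.boundary (Fin (k + 1))) := by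
  have htail : Continuous (Fin.tail : (Fin (k + 1) → I) → Fin k → I) := by fun_prop
  have hΦM : ContinuousOn (fun y : Fin (k + 1) → I => (Φ (Fin.tail y)).1 (y 0))
      {y | Fin.tail y ∈ Cube.boundary (Fin k)} :=
    continuous_eval.comp_continuousOn ((continuous_subtype_val.comp_continuousOn
      (hΦ.comp htail.continuousOn fun _ hy => hy)).prodMk (continuous_apply 0).continuousOn)
  refine ContinuousOn.mono ?_ fun y hy => mem_cube_boundary_succ_iff.1 hy
  refine ContinuousOn.union_of_isClosed (ContinuousOn.union_of_isClosed ?_ ?_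
    (isClosed_setOf_apply_eq 0 0) (isClosed_setOf_apply_eq 0 1))
    (hΦM.congr fun _ => twistedBoundaryMap_of_tail_mem hg)
    ((isClosed_setOf_apply_eq 0 0).union (isClosed_setOf_apply_eq 0 1))
    ((isClosed_cube_boundary _).preimage htail)
  · exact (hgc.comp htail).continuousOn.congr fun _ => twistedBoundaryMap_of_zero
  · exact (f.continuous.comp (hgc.comp htail)).continuousOn.congr fun _ =>
      twistedBoundaryMap_of_one

theorem extendsFromCubeBoundary_twistedPaths (h₀ : ExtendsFromCubeBoundary k M)
    (h₁ : ExtendsFromCubeBoundary (k + 1) M) : ExtendsFromCubeBoundary k (TwistedPaths f) := by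
  intro Φ hΦ
  obtain ⟨g, hg⟩ := h₀ (fun z => (Φ z).1 0)
    ((continuous_eval_const 0).comp_continuousOn (continuous_subtype_val.comp_continuousOn hΦ))
  obtain ⟨E, hE⟩ := h₁ _ (continuousOn_twistedBoundaryMap g.continuous hg hΦ)
  have hE0 (z : Fin k → I) : E (Fin.cons 0 z) = g z := by
    rw [hE (mem_cube_boundary_succ_iff.2 (Or.inl (Or.inl rfl))), twistedBoundaryMap_of_zero rfl,
      Fin.tail_cons]
  have hE1 (z : Fin k → I) : E (Fin.cons 1 z) = f (g z) := by
    rw [hE (mem_cube_boundary_succ_iff.2 (Or.inl (Or.inr rfl))), twistedBoundaryMap_of_one rfl,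
      Fin.tail_cons]
  let paths : C(Fin k → I, C(I, M)) :=
    (E.comp ⟨fun p : (Fin k → I) × I => Fin.cons p.2 p.1, by fun_prop⟩).curry
  have htwist (z : Fin k → I) : paths z 1 = f (paths z 0) := by simp [paths, hE0, hE1]
  refine ⟨⟨fun z => ⟨paths z, htwist z⟩, paths.continuous.subtype_mk _⟩, fun z hz => ?_⟩
  apply Subtype.ext
  ext t
  have hmem : Fin.tail (Fin.cons t z : Fin (k + 1) → I) ∈ Cube.boundary (Fin k) := by
    rwa [Fin.tail_cons]
  simp [paths, hE (mem_cube_boundary_succ_iff.2 (Or.inr hmem)),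
    twistedBoundaryMap_of_tail_mem hg hmem]

end TwistedPaths

end TwistedPathSpace

open TwistedPathSpace

theorem stmt_0_general {M : Type} [TopologicalSpace M]
    [SimplyConnectedSpace M]
    (hπ2 : ∀ x : M, Subsingleton (HomotopyGroup (Fin 2) M x))
    (f : C(M, M)) :
    SimplyConnectedSpace {γ : C(I, M) // γ 1 = f (γ 0)} ∧
    PathConnectedSpace {γ : C(I, M) // γ 1 = f (γ 0)} ∧
    ∀ γ : {γ : C(I, M) // γ 1 = f (γ 0)},
      Subsingleton (FundamentalGroup {γ : C(I, M) // γ 1 = f (γ 0)} γ) := by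
  have hπ1 (x : M) : Subsingleton (HomotopyGroup (Fin 1) M x) :=
    HomotopyGroup.pi1EquivFundamentalGroup.subsingleton
  have h1 : ExtendsFromCubeBoundary 1 M := extendsFromCubeBoundary_one
  have h2 := extendsFromCubeBoundary_succ hπ1
  have h3 := extendsFromCubeBoundary_succ hπ2
  obtain ⟨x⟩ := PathConnectedSpace.nonempty (X := M)
  have hconn : PathConnectedSpace (TwistedPaths f) :=
    ⟨⟨⟨(PathConnectedSpace.somePath x (f x)).toContinuousMap, by simp⟩⟩,
      (extendsFromCubeBoundary_twistedPaths h1 h2).joined⟩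
  have hsimply : SimplyConnectedSpace (TwistedPaths f) :=
    simply_connected_iff_paths_homotopic'.2
      ⟨hconn, (extendsFromCubeBoundary_twistedPaths h2 h3).homotopic⟩
  exact ⟨hsimply, hconn, fun _ => inferInstance⟩

/-- If `M` is a closed 2-connected manifold and `f : M → M` is a
fixed-point-free continuous involution, then the twisted path space
`P_f M = {γ : C([0,1], M) | γ(1) = f(γ(0))}` is simply connected (in particular it is
path-connected with trivial fundamental group). -/
theorem stmt_0 {n : ℕ} {M : Type} [TopologicalSpace M] [T2Space M] [CompactSpace M]
    [ChartedSpace (EuclideanSpace ℝ (Fin n)) M]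
    [SimplyConnectedSpace M]
    (hπ2 : ∀ x : M, Subsingleton (HomotopyGroup (Fin 2) M x))
    (f : C(M, M)) (hf : ∀ x, f (f x) = x) (hfree : ∀ x, f x ≠ x) :
    SimplyConnectedSpace {γ : C(I, M) // γ 1 = f (γ 0)} ∧
    PathConnectedSpace {γ : C(I, M) // γ 1 = f (γ 0)} ∧
    ∀ γ : {γ : C(I, M) // γ 1 = f (γ 0)},
      Subsingleton (FundamentalGroup {γ : C(I, M) // γ 1 = f (γ 0)} γ) :=
  stmt_0_general hπ2 f
end
end

section
/- Let M be a closed manifold and let f : M → M be a continuous involution which is homotopic to the identity map of M. Then the twisted path space P_f M is homotopy equivalent to the free loop space Λ M. -/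
open unitInterval ContinuousMap

section Stmt5AuxSection
open Set

noncomputable section

namespace Stmt5Aux

def pr (r : ℝ) : I := Set.projIcc 0 1 zero_le_one r

lemma continuous_pr : Continuous pr := @continuous_projIcc ℝ _ 0 1 zero_le_one _ _

lemma pr_coe {r : ℝ} (h0 : 0 ≤ r) (h1 : r ≤ 1) : ((pr r : I) : ℝ) = r := by
  rw [pr, coe_projIcc, min_eq_right h1, max_eq_right h0]

lemma pr_eq_zero {r : ℝ} (h : r ≤ 0) : pr r = 0 := by
  apply Subtype.ext
  rw [pr, coe_projIcc]
  have : min 1 r ≤ 0 := le_trans (min_le_right _ _) h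
  simp [max_eq_left this]

lemma pr_eq_one {r : ℝ} (h : 1 ≤ r) : pr r = 1 := by
  apply Subtype.ext
  rw [pr, coe_projIcc, min_eq_left h]
  simp

lemma pr_coe_I (t : I) : pr (t : ℝ) = t :=
  Subtype.ext (pr_coe t.2.1 t.2.2)

variable {M : Type} [TopologicalSpace M]

section
variable {f : C(M, M)} (H : f.Homotopy (ContinuousMap.id M))

/-- `γ` followed by the track of the homotopy at `γ 0` (from `f (γ 0)` to `γ 0`). -/
def phiFun (γ : C(I, M)) (t : ℝ) : M :=
  if t ≤ 1/2 then γ (pr (2*t)) else H (pr (2*t - 1), γ 0)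

/-- `γ` followed by the reverse track (from `γ 0` to `f (γ 0)`). -/
def psiFun (γ : C(I, M)) (t : ℝ) : M :=
  if t ≤ 1/2 then γ (pr (2*t)) else H (pr (2 - 2*t), γ 0)

lemma phiFun_cont :
    Continuous (fun p : {γ : C(I, M) // γ 1 = f (γ 0)} × ℝ => phiFun H p.1.1 p.2) := by
  apply Continuous.if_le
  · exact continuous_eval.comp
      ((continuous_subtype_val.comp continuous_fst).prodMk
        (continuous_pr.comp (by fun_prop)))
  · exact H.continuous.comp
      ((continuous_pr.comp (by fun_prop)).prodMk
        ((continuous_eval_const 0).comp (continuous_subtype_val.comp continuous_fst)))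
  · fun_prop
  · fun_prop
  · rintro ⟨⟨γ, hγ⟩, t⟩ ht
    simp only at ht
    subst ht
    norm_num
    rw [pr_eq_one (by norm_num), pr_eq_zero (by norm_num), H.apply_zero]
    exact hγ

lemma psiFun_cont :
    Continuous (fun p : {γ : C(I, M) // γ 0 = γ 1} × ℝ => psiFun H p.1.1 p.2) := by
  apply Continuous.if_le
  · exact continuous_eval.comp
      ((continuous_subtype_val.comp continuous_fst).prodMk
        (continuous_pr.comp (by fun_prop)))
  · exact H.continuous.comp
      ((continuous_pr.comp (by fun_prop)).prodMk
        ((continuous_eval_const 0).comp (continuous_subtype_val.comp continuous_fst)))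
  · fun_prop
  · fun_prop
  · rintro ⟨⟨γ, hγ⟩, t⟩ ht
    simp only at ht
    subst ht
    norm_num
    rw [pr_eq_one le_rfl, H.apply_one]
    exact hγ.symm

def Phi : C({γ : C(I, M) // γ 1 = f (γ 0)}, {γ : C(I, M) // γ 0 = γ 1}) where
  toFun γ := ⟨⟨fun t => phiFun H γ.1 t,
      (phiFun_cont H).comp ((continuous_const (y := γ)).prodMk continuous_subtype_val)⟩, by
    show phiFun H γ.1 ((0:I):ℝ) = phiFun H γ.1 ((1:I):ℝ)
    rw [phiFun, phiFun]
    norm_num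
    rw [pr_eq_zero (by norm_num), pr_eq_one (by norm_num), H.apply_one]
    rfl⟩
  continuous_toFun := by
    apply Continuous.subtype_mk
    apply continuous_of_continuous_uncurry
    exact (phiFun_cont H).comp (continuous_fst.prodMk (continuous_subtype_val.comp continuous_snd))

def Psi : C({γ : C(I, M) // γ 0 = γ 1}, {γ : C(I, M) // γ 1 = f (γ 0)}) where
  toFun γ := ⟨⟨fun t => psiFun H γ.1 t,
      (psiFun_cont H).comp ((continuous_const (y := γ)).prodMk continuous_subtype_val)⟩, by
    show psiFun H γ.1 ((1:I):ℝ) = f (psiFun H γ.1 ((0:I):ℝ))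
    rw [psiFun, psiFun]
    norm_num
    rw [show pr 0 = 0 from pr_eq_zero le_rfl] ; try rw [show pr 0 = 0 from pr_eq_zero le_rfl]
    exact H.apply_zero _⟩
  continuous_toFun := by
    apply Continuous.subtype_mk
    apply continuous_of_continuous_uncurry
    exact (psiFun_cont H).comp (continuous_fst.prodMk (continuous_subtype_val.comp continuous_snd))


/-- Homotopy from `Psi ∘ Phi` to the identity on the twisted path space: shrink the
appended "there-and-back" track. -/
def KFun (γ : C(I, M)) (s t : ℝ) : M :=
  if t ≤ (1 + 3*s)/4 then γ (pr (4*t/(1 + 3*s)))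
  else if t ≤ (1 + s)/2 then H (pr (4*t - 1 - 3*s), γ 0)
  else H (pr (2 - 2*t), γ 0)

lemma KFun_cont :
    Continuous (fun p : (I × {γ : C(I, M) // γ 1 = f (γ 0)}) × ℝ =>
      KFun H p.1.2.1 p.1.1 p.2) := by
  have hden : ∀ p : (I × {γ : C(I, M) // γ 1 = f (γ 0)}) × ℝ,
      (1 + 3*(p.1.1 : ℝ)) ≠ 0 := by
    intro p
    have := p.1.1.2.1
    positivity
  have hdiv : Continuous fun p : (I × {γ : C(I, M) // γ 1 = f (γ 0)}) × ℝ =>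
      4*p.2/(1 + 3*(p.1.1 : ℝ)) :=
    Continuous.div (by fun_prop) (by fun_prop) hden
  apply Continuous.if_le
  · exact continuous_eval.comp
      ((continuous_subtype_val.comp (continuous_snd.comp continuous_fst)).prodMk
        (continuous_pr.comp hdiv))
  · apply Continuous.if_le
    · exact H.continuous.comp ((continuous_pr.comp (by fun_prop)).prodMk
        ((continuous_eval_const 0).comp (by fun_prop)))
    · exact H.continuous.comp ((continuous_pr.comp (by fun_prop)).prodMk
        ((continuous_eval_const 0).comp (by fun_prop)))
    · fun_prop
    · fun_prop
    · rintro ⟨⟨s, γ⟩, t⟩ ht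
      simp only at ht ⊢
      have h1 : 4*t - 1 - 3*(s:ℝ) = 1 - s := by rw [ht]; ring
      have h2 : 2 - 2*t = 1 - (s:ℝ) := by rw [ht]; ring
      rw [h1, h2]
  · fun_prop
  · fun_prop
  · rintro ⟨⟨s, ⟨γ, hγ⟩⟩, t⟩ ht
    simp only at ht ⊢
    have hs0 : (0:ℝ) ≤ s := s.2.1
    have hs1 : (s:ℝ) ≤ 1 := s.2.2
    have hd : (0:ℝ) < 1 + 3*s := by linarith
    have h1 : 4*t/(1 + 3*(s:ℝ)) = 1 := by rw [ht]; field_simp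
    rw [h1, pr_eq_one le_rfl, hγ]
    rw [if_pos (by linarith : t ≤ (1 + (s:ℝ))/2)]
    have h2 : 4*t - 1 - 3*(s:ℝ) = 0 := by rw [ht]; ring
    rw [h2, pr_eq_zero le_rfl, H.apply_zero]

lemma KFun_mem (γ : C(I, M)) (hγ : γ 1 = f (γ 0)) (s : I) :
    KFun H γ s 1 = f (KFun H γ s 0) := by
  have hs0 : (0:ℝ) ≤ s := s.2.1
  have hs1 : (s:ℝ) ≤ 1 := s.2.2
  have h0 : KFun H γ s 0 = γ 0 := by
    rw [KFun, if_pos (by linarith : (0:ℝ) ≤ (1 + 3*(s:ℝ))/4)]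
    norm_num
    rw [pr_eq_zero le_rfl]
  rw [h0, KFun]
  by_cases h : (1:ℝ) ≤ (1 + 3*(s:ℝ))/4
  · rw [if_pos h]
    have hs : (s:ℝ) = 1 := by linarith [(by linarith : (3:ℝ) ≤ 3*s)]
    have : 4*(1:ℝ)/(1 + 3*(s:ℝ)) = 1 := by rw [hs]; norm_num
    rw [this, pr_eq_one le_rfl, hγ]
  · rw [if_neg h, if_neg (by linarith [(by linarith : ¬ (1:ℝ) ≤ s)] :
      ¬ (1:ℝ) ≤ (1 + (s:ℝ))/2)]
    norm_num
    rw [pr_eq_zero le_rfl, H.apply_zero]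

def Kh : Homotopy ((Psi H).comp (Phi H))
    (ContinuousMap.id {γ : C(I, M) // γ 1 = f (γ 0)}) where
  toFun p := ⟨⟨fun t => KFun H p.2.1 p.1 t,
      (KFun_cont H).comp ((continuous_const (y := p)).prodMk continuous_subtype_val)⟩,
    KFun_mem H p.2.1 p.2.2 p.1⟩
  continuous_toFun := by
    apply Continuous.subtype_mk
    apply continuous_of_continuous_uncurry
    exact (KFun_cont H).comp (continuous_fst.prodMk (continuous_subtype_val.comp continuous_snd))
  map_zero_left γ := by
    apply Subtype.ext
    apply ContinuousMap.ext
    intro t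
    show KFun H γ.1 ((0:I):ℝ) t = psiFun H ((Phi H) γ).1 t
    have ht0 : (0:ℝ) ≤ t := t.2.1
    have ht1 : (t:ℝ) ≤ 1 := t.2.2
    rw [show ((0:I):ℝ) = 0 from rfl, KFun, psiFun]
    norm_num
    have hPhi : ∀ u : I, ((Phi H) γ : C(I, M)) u = phiFun H γ.1 (u:ℝ) := fun _ => rfl
    by_cases h1 : (t:ℝ) ≤ 1/4
    · have h2 : (t:ℝ) ≤ 1/2 := by linarith
      rw [if_pos h1, if_pos h2, hPhi, phiFun,
        pr_coe (by linarith) (by linarith),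
        if_pos (by linarith : 2*(t:ℝ) ≤ 1/2),
        show 2*(2*(t:ℝ)) = 4*t by ring]
    · by_cases h2 : (t:ℝ) ≤ 1/2
      · rw [if_neg h1, if_pos h2, if_pos h2, hPhi, phiFun,
          pr_coe (by linarith) (by linarith),
          if_neg (by linarith : ¬ 2*(t:ℝ) ≤ 1/2),
          show 2*(2*(t:ℝ)) - 1 = 4*t - 1 by ring]
      · rw [if_neg h1, if_neg h2, if_neg h2, hPhi,
          show ((0:I):ℝ) = 0 from rfl, phiFun]
        norm_num
        rw [pr_eq_zero le_rfl]
  map_one_left γ := by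
    apply Subtype.ext
    apply ContinuousMap.ext
    intro t
    show KFun H γ.1 ((1:I):ℝ) t = γ.1 t
    have ht0 : (0:ℝ) ≤ t := t.2.1
    have ht1 : (t:ℝ) ≤ 1 := t.2.2
    rw [show ((1:I):ℝ) = 1 from rfl, KFun]
    norm_num
    rw [if_pos ht1, pr_coe_I]

/-- Homotopy from `Phi ∘ Psi` to the identity on the free loop space. -/
def K'Fun (δ : C(I, M)) (s t : ℝ) : M :=
  if t ≤ (1 + 3*s)/4 then δ (pr (4*t/(1 + 3*s)))
  else if t ≤ (1 + s)/2 then H (pr (2 + 3*s - 4*t), δ 0)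
  else H (pr (2*t - 1), δ 0)

lemma K'Fun_cont :
    Continuous (fun p : (I × {γ : C(I, M) // γ 0 = γ 1}) × ℝ =>
      K'Fun H p.1.2.1 p.1.1 p.2) := by
  have hden : ∀ p : (I × {γ : C(I, M) // γ 0 = γ 1}) × ℝ,
      (1 + 3*(p.1.1 : ℝ)) ≠ 0 := by
    intro p
    have := p.1.1.2.1
    positivity
  have hdiv : Continuous fun p : (I × {γ : C(I, M) // γ 0 = γ 1}) × ℝ =>
      4*p.2/(1 + 3*(p.1.1 : ℝ)) :=
    Continuous.div (by fun_prop) (by fun_prop) hden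
  apply Continuous.if_le
  · exact continuous_eval.comp
      ((continuous_subtype_val.comp (continuous_snd.comp continuous_fst)).prodMk
        (continuous_pr.comp hdiv))
  · apply Continuous.if_le
    · exact H.continuous.comp ((continuous_pr.comp (by fun_prop)).prodMk
        ((continuous_eval_const 0).comp (by fun_prop)))
    · exact H.continuous.comp ((continuous_pr.comp (by fun_prop)).prodMk
        ((continuous_eval_const 0).comp (by fun_prop)))
    · fun_prop
    · fun_prop
    · rintro ⟨⟨s, γ⟩, t⟩ ht
      simp only at ht ⊢
      have h1 : 2 + 3*(s:ℝ) - 4*t = s := by rw [ht]; ring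
      have h2 : 2*t - 1 = (s:ℝ) := by rw [ht]; ring
      rw [h1, h2]
  · fun_prop
  · fun_prop
  · rintro ⟨⟨s, ⟨γ, hγ⟩⟩, t⟩ ht
    simp only at ht ⊢
    have hs0 : (0:ℝ) ≤ s := s.2.1
    have hs1 : (s:ℝ) ≤ 1 := s.2.2
    have hd : (0:ℝ) < 1 + 3*s := by linarith
    have h1 : 4*t/(1 + 3*(s:ℝ)) = 1 := by rw [ht]; field_simp
    rw [h1, pr_eq_one le_rfl, ← hγ]
    rw [if_pos (by linarith : t ≤ (1 + (s:ℝ))/2)]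
    have h2 : 2 + 3*(s:ℝ) - 4*t = 1 := by rw [ht]; ring
    rw [h2, pr_eq_one le_rfl, H.apply_one]
    rfl

lemma K'Fun_mem (γ : C(I, M)) (hγ : γ 0 = γ 1) (s : I) :
    K'Fun H γ s 0 = K'Fun H γ s 1 := by
  have hs0 : (0:ℝ) ≤ s := s.2.1
  have hs1 : (s:ℝ) ≤ 1 := s.2.2
  have h0 : K'Fun H γ s 0 = γ 0 := by
    rw [K'Fun, if_pos (by linarith : (0:ℝ) ≤ (1 + 3*(s:ℝ))/4)]
    norm_num
    rw [pr_eq_zero le_rfl]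
  rw [h0, K'Fun]
  by_cases h : (1:ℝ) ≤ (1 + 3*(s:ℝ))/4
  · rw [if_pos h]
    have hs : (s:ℝ) = 1 := by linarith [(by linarith : (3:ℝ) ≤ 3*s)]
    have : 4*(1:ℝ)/(1 + 3*(s:ℝ)) = 1 := by rw [hs]; norm_num
    rw [this, pr_eq_one le_rfl]
    exact hγ
  · rw [if_neg h, if_neg (by linarith [(by linarith : ¬ (1:ℝ) ≤ s)] :
      ¬ (1:ℝ) ≤ (1 + (s:ℝ))/2)]
    norm_num
    rw [pr_eq_one le_rfl, H.apply_one]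
    rfl

def K'h : Homotopy ((Phi H).comp (Psi H))
    (ContinuousMap.id {γ : C(I, M) // γ 0 = γ 1}) where
  toFun p := ⟨⟨fun t => K'Fun H p.2.1 p.1 t,
      (K'Fun_cont H).comp ((continuous_const (y := p)).prodMk continuous_subtype_val)⟩,
    K'Fun_mem H p.2.1 p.2.2 p.1⟩
  continuous_toFun := by
    apply Continuous.subtype_mk
    apply continuous_of_continuous_uncurry
    exact (K'Fun_cont H).comp (continuous_fst.prodMk (continuous_subtype_val.comp continuous_snd))
  map_zero_left δ := by
    apply Subtype.ext
    apply ContinuousMap.ext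
    intro t
    show K'Fun H δ.1 ((0:I):ℝ) t = phiFun H ((Psi H) δ).1 t
    have ht0 : (0:ℝ) ≤ t := t.2.1
    have ht1 : (t:ℝ) ≤ 1 := t.2.2
    rw [show ((0:I):ℝ) = 0 from rfl, K'Fun, phiFun]
    norm_num
    have hPsi : ∀ u : I, ((Psi H) δ : C(I, M)) u = psiFun H δ.1 (u:ℝ) := fun _ => rfl
    by_cases h1 : (t:ℝ) ≤ 1/4
    · have h2 : (t:ℝ) ≤ 1/2 := by linarith
      rw [if_pos h1, if_pos h2, hPsi, psiFun,
        pr_coe (by linarith) (by linarith),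
        if_pos (by linarith : 2*(t:ℝ) ≤ 1/2),
        show 2*(2*(t:ℝ)) = 4*t by ring]
    · by_cases h2 : (t:ℝ) ≤ 1/2
      · rw [if_neg h1, if_pos h2, if_pos h2, hPsi, psiFun,
          pr_coe (by linarith) (by linarith),
          if_neg (by linarith : ¬ 2*(t:ℝ) ≤ 1/2),
          show 2 - 2*(2*(t:ℝ)) = 2 - 4*t by ring]
      · rw [if_neg h1, if_neg h2, if_neg h2, hPsi,
          show ((0:I):ℝ) = 0 from rfl, psiFun]
        norm_num
        rw [pr_eq_zero le_rfl]
  map_one_left δ := by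
    apply Subtype.ext
    apply ContinuousMap.ext
    intro t
    show K'Fun H δ.1 ((1:I):ℝ) t = δ.1 t
    have ht0 : (0:ℝ) ≤ t := t.2.1
    have ht1 : (t:ℝ) ≤ 1 := t.2.2
    rw [show ((1:I):ℝ) = 1 from rfl, K'Fun]
    norm_num
    rw [if_pos ht1, pr_coe_I]

end

end Stmt5Aux

end

end Stmt5AuxSection

/-- If an involution `f` of a closed manifold `M` is homotopic to the
identity, then the twisted path space `P_f M` is homotopy equivalent to the free loop
space `Λ M`. -/
theorem stmt_5 {n : ℕ} {M : Type} [TopologicalSpace M] [T2Space M] [CompactSpace M]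
    [ChartedSpace (EuclideanSpace ℝ (Fin n)) M]
    (f : C(M, M)) (hf : ∀ x, f (f x) = x)
    (hfid : f.Homotopic (ContinuousMap.id M)) :
    Nonempty (({γ : C(I, M) // γ 1 = f (γ 0)}) ≃ₕ ({γ : C(I, M) // γ 0 = γ 1})) := by
  obtain ⟨H⟩ := hfid
  exact ⟨{ toFun := Stmt5Aux.Phi H, invFun := Stmt5Aux.Psi H,
           left_inv := ⟨Stmt5Aux.Kh H⟩, right_inv := ⟨Stmt5Aux.K'h H⟩ }⟩
end

section
/- Let n ≥ 1 be odd. Then the evaluation fibration ev₀ : P_a S^n → S^n, ev₀(γ) = γ(0), admits a continuous section: there exists a continuous map s : S^n → P_a S^n with s(p)(0) = p for all p ∈ S^n (for instance s(p)(t) = cos(πt) p + sin(πt) X(p) for a continuous unit tangent vector field X on S^n). -/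
/-!
A unit tangent field `X` on the sphere turns every point `p` into the half great circle
`t ↦ cos (π t) p + sin (π t) X(p)` from `p` to `-p`, and this depends continuously on `p`.
On `S^n ⊆ ℝ^(n+1)` with `n + 1` even such a field is obtained by pairing the coordinates and
rotating each pair by a right angle: `(x₀, x₁, x₂, x₃, …) ↦ (x₁, -x₀, x₃, -x₂, …)`.
-/

open unitInterval Metric RealInnerProductSpace Real

section SignedInvolution

variable {ι : Type*} [LinearOrder ι] (τ : ι → ι)

def involutionSign (i : ι) : ℝ := if i < τ i then 1 else -1

variable {τ}

theorem involutionSign_apply_eq_neg (hτ : Function.Involutive τ) (hfix : ∀ i, τ i ≠ i) (i : ι) :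
    involutionSign τ (τ i) = -involutionSign τ i := by
  unfold involutionSign
  rw [hτ i]
  rcases lt_or_gt_of_ne (hfix i) with h | h <;> simp [h, h.not_gt]

theorem involutionSign_mul_self (i : ι) : involutionSign τ i * involutionSign τ i = 1 := by
  unfold involutionSign; split_ifs <;> norm_num

variable (τ) in
def involutionRotation (x : EuclideanSpace ℝ ι) : EuclideanSpace ℝ ι :=
  WithLp.toLp 2 fun i => involutionSign τ i * x (τ i)

theorem continuous_involutionRotation : Continuous (involutionRotation τ) := by
  unfold involutionRotation; fun_prop

variable [Fintype ι]

theorem inner_involutionRotation_self (hτ : Function.Involutive τ) (hfix : ∀ i, τ i ≠ i)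
    (x : EuclideanSpace ℝ ι) : ⟪x, involutionRotation τ x⟫ = 0 := by
  simp only [PiLp.inner_apply, involutionRotation, RCLike.inner_apply, conj_trivial]
  refine Finset.sum_involution (fun i _ => τ i) (fun i _ => ?_) (fun i _ _ => hfix i)
    (fun i _ => Finset.mem_univ _) (fun i _ => hτ i)
  rw [involutionSign_apply_eq_neg hτ hfix, hτ i]
  ring

theorem norm_involutionRotation (hτ : Function.Involutive τ) (x : EuclideanSpace ℝ ι) :
    ‖involutionRotation τ x‖ = ‖x‖ := by
  simp only [EuclideanSpace.norm_eq, involutionRotation, Real.norm_eq_abs, sq_abs]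
  congr 1
  rw [← Equiv.sum_comp hτ.toPerm (fun i => x i ^ 2)]
  refine Finset.sum_congr rfl fun i _ => ?_
  simp only [Function.Involutive.coe_toPerm]
  linear_combination (x (τ i)) ^ 2 * involutionSign_mul_self (τ := τ) i

end SignedInvolution

def finPairSwap {m : ℕ} (hm : Even m) (i : Fin m) : Fin m :=
  if h : i.val % 2 = 0 then ⟨i.val + 1, by grind⟩ else ⟨i.val - 1, by grind⟩

theorem finPairSwap_val {m : ℕ} (hm : Even m) (i : Fin m) :
    (finPairSwap hm i).val = if i.val % 2 = 0 then i.val + 1 else i.val - 1 := by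
  unfold finPairSwap; split_ifs <;> rfl

theorem finPairSwap_involutive {m : ℕ} (hm : Even m) : Function.Involutive (finPairSwap hm) := by
  intro i; ext; rw [finPairSwap_val, finPairSwap_val]; split_ifs <;> omega

theorem finPairSwap_ne {m : ℕ} (hm : Even m) (i : Fin m) : finPairSwap hm i ≠ i := by
  intro h; have := congrArg Fin.val h; rw [finPairSwap_val] at this; split_ifs at this <;> omega

section Sphere

variable {E : Type*} [NormedAddCommGroup E] [InnerProductSpace ℝ E]

theorem norm_cos_smul_add_sin_smul {x y : E} (hxy : ⟪x, y⟫ = 0) (hx : ‖x‖ = 1) (hy : ‖y‖ = 1)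
    (θ : ℝ) : ‖cos θ • x + sin θ • y‖ = 1 := by
  have hperp : ⟪cos θ • x, sin θ • y⟫ = 0 := by
    rw [real_inner_smul_left, real_inner_smul_right, hxy, mul_zero, mul_zero]
  have hsq := norm_add_sq_eq_norm_sq_add_norm_sq_real hperp
  rw [norm_smul, norm_smul, hx, hy, Real.norm_eq_abs, Real.norm_eq_abs, mul_one, mul_one,
    abs_mul_abs_self, abs_mul_abs_self, ← sq, ← sq, ← sq, Real.cos_sq_add_sin_sq] at hsq
  exact (pow_eq_one_iff_of_nonneg (norm_nonneg _) two_ne_zero).mp hsq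

theorem exists_antipodalPath_section {X : sphere (0 : E) 1 → E} (hXc : Continuous X)
    (hX : ∀ p : sphere (0 : E) 1, ⟪(p : E), X p⟫ = 0) (hX1 : ∀ p, ‖X p‖ = 1) :
    ∃ s : C(sphere (0 : E) 1, {γ : C(I, sphere (0 : E) 1) // γ 1 = -(γ 0)}),
      ∀ p, (s p).1 0 = p := by
  let F : C(sphere (0 : E) 1 × I, sphere (0 : E) 1) :=
    { toFun := fun q => ⟨cos (π * q.2) • (q.1 : E) + sin (π * q.2) • X q.1, by
        rw [mem_sphere_zero_iff_norm]
        exact norm_cos_smul_add_sin_smul (hX q.1) (norm_eq_of_mem_sphere q.1) (hX1 q.1) _⟩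
      continuous_toFun := by fun_prop }
  have start (p) : F (p, 0) = p := Subtype.ext (by simp [F])
  have finish (p) : F (p, 1) = -p := Subtype.ext (by simp [F])
  have antipodal (p) : F.curry p 1 = -(F.curry p 0) := by simp [start, finish]
  exact ⟨⟨fun p => ⟨F.curry p, antipodal p⟩, F.curry.continuous.subtype_mk antipodal⟩, start⟩

end Sphere

theorem exists_unitTangentField_of_even {m : ℕ} (hm : Even m) :
    ∃ X : sphere (0 : EuclideanSpace ℝ (Fin m)) 1 → EuclideanSpace ℝ (Fin m), Continuous X ∧
      (∀ p : sphere (0 : EuclideanSpace ℝ (Fin m)) 1, ⟪(p : EuclideanSpace ℝ (Fin m)), X p⟫ = 0) ∧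
      ∀ p, ‖X p‖ = 1 :=
  ⟨fun p => involutionRotation (finPairSwap hm) p,
    continuous_involutionRotation.comp continuous_subtype_val,
    fun p => inner_involutionRotation_self (finPairSwap_involutive hm) (finPairSwap_ne hm) p,
    fun p => (norm_involutionRotation (finPairSwap_involutive hm) p).trans
      (norm_eq_of_mem_sphere p)⟩

theorem stmt_12_general (n : ℕ) (hn : Odd n) :
    ∃ s : C(Metric.sphere (0 : EuclideanSpace ℝ (Fin (n + 1))) 1,
        {γ : C(I, Metric.sphere (0 : EuclideanSpace ℝ (Fin (n + 1))) 1) // γ 1 = -(γ 0)}),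
      ∀ p, (s p).1 0 = p := by
  obtain ⟨X, hXc, hX, hX1⟩ := exists_unitTangentField_of_even hn.add_one
  exact exists_antipodalPath_section hXc hX hX1

/-- For odd `n ≥ 1`, the evaluation fibration
`ev₀ : P_a S^n → S^n`, `γ ↦ γ(0)`, admits a continuous section. -/
theorem stmt_12 (n : ℕ) (hn : Odd n) (hn1 : 1 ≤ n) :
    ∃ s : C(Metric.sphere (0 : EuclideanSpace ℝ (Fin (n + 1))) 1,
        {γ : C(I, Metric.sphere (0 : EuclideanSpace ℝ (Fin (n + 1))) 1) // γ 1 = -(γ 0)}),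
      ∀ p, (s p).1 0 = p :=
  stmt_12_general n hn
end

section
/- Let M be a topological space and f : M → M a continuous involution. Define Rot : P_f M → P_f M by Rot(c)(t) = c(t + 1/2) for t ∈ [0, 1/2] and Rot(c)(t) = f(c(t − 1/2)) for t ∈ [1/2, 1]. Then: (i) Rot is a well-defined continuous self-map of P_f M (it equals the time-1/4 map of the circle action χ_f on P_f M); (ii) Rot is homotopic to the identity of P_f M; and (iii) for every loop γ ∈ Λ M and every σ ∈ P_f M with γ(0) = σ(0), one has concat(γ, σ) ∈ P_f M and Rot(concat(γ, σ)) = concat(σ, f ∘ γ). -/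
open unitInterval

/-!
A path `c` twisted by `f` extends to `ℝ` by `c (t + 1) = f (c t)`; shifting the extension by
`a ∈ [0, 1]` and restricting to `[0, 1]` gives again a twisted path, continuously in `(a, c)`.
`Rot` is the shift by `1 / 2`, so the shifts by `s / 2`, `s ∈ [0, 1]`, join it to the identity,
and on `concat(γ, σ)` the shift by `1 / 2` moves `σ` to the front and `f ∘ γ` to the back.
-/

abbrev TwistedPaths {M : Type*} [TopologicalSpace M] (f : C(M, M)) : Type _ :=
  {γ : C(I, M) // γ 1 = f (γ 0)}

namespace TwistedPaths

open Set

variable {M : Type*} [TopologicalSpace M] {f : C(M, M)}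

noncomputable def rotateFun (f : C(M, M)) (a : I) (c : C(I, M)) (t : I) : M :=
  if (t : ℝ) + a ≤ 1 then c (projIcc 0 1 zero_le_one (t + a))
  else f (c (projIcc 0 1 zero_le_one (t + a - 1)))

theorem continuous_rotateFun :
    Continuous fun p : (I × TwistedPaths f) × I => rotateFun f p.1.1 p.1.2.1 p.2 := by
  refine Continuous.if_le (by fun_prop) (by fun_prop) (by fun_prop) continuous_const ?_
  rintro ⟨⟨a, c⟩, t⟩ (h : (t : ℝ) + a = 1)
  simp [h, c.2]

theorem rotateFun_of_le {a t : I} (c : C(I, M)) (h : (t : ℝ) + a ≤ 1) :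
    rotateFun f a c t = c (projIcc 0 1 zero_le_one (t + a)) :=
  if_pos h

theorem rotateFun_of_one_le {a t : I} (c : TwistedPaths f) (h : 1 ≤ (t : ℝ) + a) :
    rotateFun f a c.1 t = f (c.1 (projIcc 0 1 zero_le_one (t + a - 1))) := by
  rcases h.eq_or_lt with h | h
  · simp [rotateFun, ← h, c.2]
  · exact if_neg h.not_ge

theorem rotateFun_one (a : I) (c : TwistedPaths f) :
    rotateFun f a c.1 1 = f (rotateFun f a c.1 0) := by
  rw [rotateFun_of_one_le c (by simp [a.2.1]), rotateFun_of_le _ (by simp [a.2.2])]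
  simp

noncomputable def rotate (f : C(M, M)) : C(I × TwistedPaths f, TwistedPaths f) :=
  let G : C((I × TwistedPaths f) × I, M) := ⟨_, continuous_rotateFun⟩
  ⟨fun p => ⟨G.curry p, rotateFun_one p.1 p.2⟩, G.curry.continuous.subtype_mk _⟩

theorem rotate_apply (a : I) (c : TwistedPaths f) (t : I) :
    (rotate f (a, c)).1 t = rotateFun f a c.1 t :=
  rfl

theorem rotate_zero (c : TwistedPaths f) : rotate f (0, c) = c := by
  ext t
  rw [rotate_apply, rotateFun_of_le _ (by simp [t.2.2])]
  simp

theorem rotate_curry_homotopic_id (a : I) :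
    ((rotate f).curry a).Homotopic (ContinuousMap.id _) :=
  ContinuousMap.Homotopic.symm
    ⟨⟨⟨fun q => rotate f (q.1 * a, q.2), by fun_prop⟩,
      fun c => by simpa using rotate_zero c, fun _ => by simp⟩⟩

noncomputable def rotateHalf (f : C(M, M)) : C(TwistedPaths f, TwistedPaths f) :=
  (rotate f).curry ⟨1 / 2, by norm_num, by norm_num⟩

theorem rotateHalf_apply_of_le (c : TwistedPaths f) {t : I} (ht : (t : ℝ) ≤ 1 / 2) :
    (rotateHalf f c).1 t = c.1 (projIcc 0 1 zero_le_one (t + 1 / 2)) :=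
  rotateFun_of_le _ (by simp; linarith)

theorem rotateHalf_apply_of_half_le (c : TwistedPaths f) {t : I} (ht : 1 / 2 ≤ (t : ℝ)) :
    (rotateHalf f c).1 t = f (c.1 (projIcc 0 1 zero_le_one (t - 1 / 2))) := by
  rw [rotateHalf, ContinuousMap.curry_apply, rotate_apply,
    rotateFun_of_one_le c (by simp; linarith)]
  ring_nf

theorem rotateHalf_concat (c : TwistedPaths f) {γ τ : C(I, M)}
    (hγ : ∀ t : I, (t : ℝ) ≤ 1 / 2 → c.1 t = γ (projIcc 0 1 zero_le_one (2 * t)))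
    (hτ : ∀ t : I, 1 / 2 ≤ (t : ℝ) → c.1 t = τ (projIcc 0 1 zero_le_one (2 * t - 1)))
    (t : I) :
    ((t : ℝ) ≤ 1 / 2 → (rotateHalf f c).1 t = τ (projIcc 0 1 zero_le_one (2 * t))) ∧
    (1 / 2 ≤ (t : ℝ) →
      (rotateHalf f c).1 t = f (γ (projIcc 0 1 zero_le_one (2 * t - 1)))) := by
  have coe_projIcc_of_mem {x : ℝ} (h₀ : 0 ≤ x) (h₁ : x ≤ 1) :
      ((projIcc 0 1 zero_le_one x : I) : ℝ) = x := by
    rw [projIcc_of_mem _ ⟨h₀, h₁⟩]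
  obtain ⟨h₀, h₁⟩ := t.2
  constructor
  · intro ht
    have hs := coe_projIcc_of_mem (x := t + 1 / 2) (by linarith) (by linarith)
    rw [rotateHalf_apply_of_le c ht, hτ _ (by linarith), hs]
    ring_nf
  · intro ht
    have hs := coe_projIcc_of_mem (x := t - 1 / 2) (by linarith) (by linarith)
    rw [rotateHalf_apply_of_half_le c ht, hγ _ (by linarith), hs]
    ring_nf

end TwistedPaths

theorem stmt_15_general {M : Type} [TopologicalSpace M] (f : C(M, M)) :
    ∃ Rot : C({γ : C(I, M) // γ 1 = f (γ 0)}, {γ : C(I, M) // γ 1 = f (γ 0)}),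
      -- (i) the defining piecewise formula
      (∀ (c : {γ : C(I, M) // γ 1 = f (γ 0)}) (t : I),
        ((t : ℝ) ≤ 1 / 2 →
          (Rot c).1 t = c.1 (Set.projIcc (0 : ℝ) 1 zero_le_one ((t : ℝ) + 1 / 2))) ∧
        (1 / 2 ≤ (t : ℝ) →
          (Rot c).1 t = f (c.1 (Set.projIcc (0 : ℝ) 1 zero_le_one ((t : ℝ) - 1 / 2))))) ∧
      -- (ii) `Rot` is homotopic to the identity
      Rot.Homotopic (ContinuousMap.id _) ∧
      -- (iii) for every loop `γ` and every `σ ∈ P_f M` with `γ(0) = σ(0)` the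
      -- concatenation `concat(γ, σ)` lies in `P_f M` and is mapped by `Rot` to
      -- `concat(σ, f ∘ γ)`
      (∀ (γ : C(I, M)), γ 0 = γ 1 → ∀ sg : {γ : C(I, M) // γ 1 = f (γ 0)},
        γ 0 = sg.1 0 →
        ∀ cc : C(I, M),
          ((∀ t : I, (t : ℝ) ≤ 1 / 2 →
              cc t = γ (Set.projIcc (0 : ℝ) 1 zero_le_one (2 * (t : ℝ)))) ∧
           (∀ t : I, 1 / 2 ≤ (t : ℝ) →
              cc t = sg.1 (Set.projIcc (0 : ℝ) 1 zero_le_one (2 * (t : ℝ) - 1)))) →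
          ∃ hcc : cc 1 = f (cc 0),
            ∀ t : I,
              ((t : ℝ) ≤ 1 / 2 →
                (Rot ⟨cc, hcc⟩).1 t =
                  sg.1 (Set.projIcc (0 : ℝ) 1 zero_le_one (2 * (t : ℝ)))) ∧
              (1 / 2 ≤ (t : ℝ) →
                (Rot ⟨cc, hcc⟩).1 t =
                  f (γ (Set.projIcc (0 : ℝ) 1 zero_le_one (2 * (t : ℝ) - 1))))) := by
  refine ⟨TwistedPaths.rotateHalf f,
    fun c _ => ⟨TwistedPaths.rotateHalf_apply_of_le c,
      TwistedPaths.rotateHalf_apply_of_half_le c⟩,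
    TwistedPaths.rotate_curry_homotopic_id _, ?_⟩
  rintro γ - τ hγτ cc ⟨hγ, hτ⟩
  have hcc : cc 1 = f (cc 0) := by
    rw [hτ 1 (by norm_num), hγ 0 (by norm_num)]
    norm_num [hγτ, τ.2]
  exact ⟨hcc, TwistedPaths.rotateHalf_concat ⟨cc, hcc⟩ hγ hτ⟩

/-- For an involution `f` of `M`, the rotation map
`Rot(c)(t) = c(t + 1/2)` for `t ≤ 1/2`, `Rot(c)(t) = f(c(t − 1/2))` for `t ≥ 1/2`, is a
well-defined continuous self-map of `P_f M`, it is homotopic to the identity of `P_f M`,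
and for a loop `γ` and `σ ∈ P_f M` with `γ(0) = σ(0)` one has
`concat(γ, σ) ∈ P_f M` and `Rot(concat(γ, σ)) = concat(σ, f ∘ γ)`. -/
theorem stmt_15 {M : Type} [TopologicalSpace M] (f : C(M, M)) (hf : ∀ x, f (f x) = x) :
    ∃ Rot : C({γ : C(I, M) // γ 1 = f (γ 0)}, {γ : C(I, M) // γ 1 = f (γ 0)}),
      -- (i) the defining piecewise formula
      (∀ (c : {γ : C(I, M) // γ 1 = f (γ 0)}) (t : I),
        ((t : ℝ) ≤ 1 / 2 →
          (Rot c).1 t = c.1 (Set.projIcc (0 : ℝ) 1 zero_le_one ((t : ℝ) + 1 / 2))) ∧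
        (1 / 2 ≤ (t : ℝ) →
          (Rot c).1 t = f (c.1 (Set.projIcc (0 : ℝ) 1 zero_le_one ((t : ℝ) - 1 / 2))))) ∧
      -- (ii) `Rot` is homotopic to the identity
      Rot.Homotopic (ContinuousMap.id _) ∧
      -- (iii) for every loop `γ` and every `σ ∈ P_f M` with `γ(0) = σ(0)` the
      -- concatenation `concat(γ, σ)` lies in `P_f M` and is mapped by `Rot` to
      -- `concat(σ, f ∘ γ)`
      (∀ (γ : C(I, M)), γ 0 = γ 1 → ∀ sg : {γ : C(I, M) // γ 1 = f (γ 0)},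
        γ 0 = sg.1 0 →
        ∀ cc : C(I, M),
          ((∀ t : I, (t : ℝ) ≤ 1 / 2 →
              cc t = γ (Set.projIcc (0 : ℝ) 1 zero_le_one (2 * (t : ℝ)))) ∧
           (∀ t : I, 1 / 2 ≤ (t : ℝ) →
              cc t = sg.1 (Set.projIcc (0 : ℝ) 1 zero_le_one (2 * (t : ℝ) - 1)))) →
          ∃ hcc : cc 1 = f (cc 0),
            ∀ t : I,
              ((t : ℝ) ≤ 1 / 2 →
                (Rot ⟨cc, hcc⟩).1 t =
                  sg.1 (Set.projIcc (0 : ℝ) 1 zero_le_one (2 * (t : ℝ)))) ∧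
              (1 / 2 ≤ (t : ℝ) →
                (Rot ⟨cc, hcc⟩).1 t =
                  f (γ (Set.projIcc (0 : ℝ) 1 zero_le_one (2 * (t : ℝ) - 1))))) :=
  stmt_15_general f
end

section
/- Let n ≥ 1 be odd and let X, Y : S^n → ℝ^{n+1} be continuous maps such that for all p ∈ S^n: ⟨X(p), p⟩ = 0, ‖X(p)‖ = 1, X(−p) = −X(p), ⟨Y(p), p⟩ = 0, ‖Y(p)‖ = 1, and ⟨X(p), Y(p)⟩ = 0. For q ∈ S^n let η_q ∈ C([0,1], S^n) be η_q(t) = cos(πt) q + sin(πt) X(q), a path from q to −q. Define Φ, Φ' : P_a S^n → Λ S^n by Φ(σ) = concat(σ, η_{−σ(0)}) and Φ'(σ) = concat(reverse(η_{σ(0)}), σ), where reverse(α)(t) = α(1 − t). Then Φ and Φ' are well-defined continuous maps into the free loop space and Φ is homotopic to Φ'. -/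
open unitInterval
open scoped RealInnerProductSpace ContinuousMap

/-!
The unit tangent field `cos (π s) • X + sin (π s) • Y` turns `X` into `-X` as `s` runs over
`[0, 1]`. Closing an antipodal path `σ` with the half great circle from `-σ 0` in these directions
deforms `Φ σ = concat (σ, η_{-σ 0})` into `concat (σ, reverse η_{σ 0})`, because `X` is odd.
That loop is `Φ' σ = concat (reverse η_{σ 0}, σ)` rotated by half a turn, and rotating free
loops is a homotopy.
-/

noncomputable section FreeLoop

variable {Z : Type*} [TopologicalSpace Z]

abbrev FreeLoop (Z : Type*) [TopologicalSpace Z] := {γ : C(I, Z) // γ 0 = γ 1}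

abbrev LoopPair (Z : Type*) [TopologicalSpace Z] :=
  {p : C(I, Z) × C(I, Z) // p.1 1 = p.2 0 ∧ p.2 1 = p.1 0}

def LoopPair.swap : C(LoopPair Z, LoopPair Z) where
  toFun p := ⟨p.1.swap, p.2.2, p.2.1⟩
  continuous_toFun := by fun_prop

def loopConcat : C(LoopPair Z, FreeLoop Z) where
  toFun p := ⟨ContinuousMap.curry
    { toFun := fun x : LoopPair Z × I =>
        if (x.2 : ℝ) ≤ 1 / 2 then x.1.1.1 (Set.projIcc 0 1 zero_le_one (2 * x.2))
        else x.1.1.2 (Set.projIcc 0 1 zero_le_one (2 * x.2 - 1))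
      continuous_toFun := by
        refine Continuous.if_le (by fun_prop) (by fun_prop) (by fun_prop) continuous_const ?_
        intro x hx
        simp [hx, x.1.2.1] } p, by norm_num [p.2.2]⟩
  continuous_toFun := by fun_prop

lemma loopConcat_apply_of_le_half (p : LoopPair Z) {t : I} (ht : (t : ℝ) ≤ 1 / 2) :
    (loopConcat p).1 t = p.1.1 (Set.projIcc 0 1 zero_le_one (2 * t)) :=
  if_pos ht

lemma loopConcat_apply_of_half_le (p : LoopPair Z) {t : I} (ht : 1 / 2 ≤ (t : ℝ)) :
    (loopConcat p).1 t = p.1.2 (Set.projIcc 0 1 zero_le_one (2 * t - 1)) := by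
  rcases ht.lt_or_eq with ht | ht
  · exact if_neg (not_le.2 ht)
  · simp [loopConcat, ← ht, p.2.1]

def loopShift : C(ℝ × FreeLoop Z, FreeLoop Z) where
  toFun x := ⟨ContinuousMap.curry
    { toFun := fun y : (ℝ × FreeLoop Z) × I =>
        y.1.2.1 (Set.projIcc 0 1 zero_le_one (Int.fract (y.2 + y.1.1)))
      continuous_toFun := by
        -- `γ 0 = γ 1` is what makes `γ ∘ fract` continuous
        refine ContinuousOn.comp_fract
          (f := fun (y : (ℝ × FreeLoop Z) × I) r => y.1.2.1 (Set.projIcc 0 1 zero_le_one r))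
          (Continuous.continuousOn (by fun_prop)) (by fun_prop) fun y => ?_
        simp [y.1.2.2] } x, by simp [Int.fract_one_add]⟩
  continuous_toFun := by fun_prop

lemma loopShift_zero (γ : FreeLoop Z) : loopShift (0, γ) = γ := by
  ext t
  simp only [loopShift, ContinuousMap.coe_mk, ContinuousMap.curry_apply, add_zero]
  rcases t.2.2.lt_or_eq with ht | ht
  · rw [Int.fract_eq_self.2 ⟨t.2.1, ht⟩, Set.projIcc_val]
  · obtain rfl : t = 1 := Subtype.ext ht
    simp [γ.2]

lemma loopShift_half_loopConcat_swap (p : LoopPair Z) :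
    loopShift (1 / 2, loopConcat (LoopPair.swap p)) = loopConcat p := by
  ext t
  simp only [loopShift, ContinuousMap.coe_mk, ContinuousMap.curry_apply]
  rcases lt_or_ge (t : ℝ) (1 / 2) with ht | ht
  · have hmem : (t : ℝ) + 1 / 2 ∈ I := ⟨by linarith [t.2.1], by linarith⟩
    rw [Int.fract_eq_self.2 ⟨hmem.1, by linarith⟩, Set.projIcc_of_mem _ hmem,
      loopConcat_apply_of_le_half p ht.le, loopConcat_apply_of_half_le _ (by simp [t.2.1])]
    simp [LoopPair.swap, mul_add]
  · have hmem : (t : ℝ) - 1 / 2 ∈ I := ⟨by linarith, by linarith [t.2.2]⟩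
    have hfract : Int.fract ((t : ℝ) + 1 / 2) = t - 1 / 2 := by
      rw [show (t : ℝ) + 1 / 2 = t - 1 / 2 + 1 by ring, Int.fract_add_one,
        Int.fract_eq_self.2 ⟨hmem.1, by linarith [t.2.2]⟩]
    rw [hfract, Set.projIcc_of_mem _ hmem, loopConcat_apply_of_half_le p ht,
      loopConcat_apply_of_le_half _ (by simp; linarith [t.2.2])]
    simp [LoopPair.swap, mul_sub]

theorem homotopic_loopShift {P : Type*} [TopologicalSpace P] (F : C(P, FreeLoop Z)) (c : ℝ) :
    F.Homotopic (loopShift.comp ((ContinuousMap.const P c).prodMk F)) :=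
  ⟨{ toFun := fun x => loopShift (x.1 * c, F x.2)
     continuous_toFun := by fun_prop
     map_zero_left := fun x => by simp [loopShift_zero]
     map_one_left := fun x => by simp }⟩

theorem homotopic_loopConcat_swap {P : Type*} [TopologicalSpace P] (F : C(P, LoopPair Z)) :
    (loopConcat.comp (LoopPair.swap.comp F)).Homotopic (loopConcat.comp F) := by
  convert homotopic_loopShift (loopConcat.comp (LoopPair.swap.comp F)) (1 / 2)
  ext1 x
  exact (loopShift_half_loopConcat_swap (F x)).symm

end FreeLoop

noncomputable section GreatCircle

variable {E : Type*} [NormedAddCommGroup E] [InnerProductSpace ℝ E]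

def greatCircle (u v : E) (θ : ℝ) : E :=
  Real.cos (Real.pi * θ) • u + Real.sin (Real.pi * θ) • v

lemma norm_greatCircle {u v : E} (hu : ‖u‖ = 1) (hv : ‖v‖ = 1) (huv : ⟪u, v⟫ = 0)
    (θ : ℝ) : ‖greatCircle u v θ‖ = 1 := by
  refine (pow_eq_one_iff_of_nonneg (norm_nonneg _) two_ne_zero).1 ?_
  rw [greatCircle, norm_add_sq_real, norm_smul, norm_smul, real_inner_smul_left,
    real_inner_smul_right, huv, hu, hv]
  simp [Real.cos_sq_add_sin_sq]

lemma inner_greatCircle_left (u v w : E) (θ : ℝ) :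
    ⟪greatCircle u v θ, w⟫ =
      Real.cos (Real.pi * θ) * ⟪u, w⟫ + Real.sin (Real.pi * θ) * ⟪v, w⟫ := by
  rw [greatCircle, inner_add_left, real_inner_smul_left, real_inner_smul_left]

@[simp] lemma greatCircle_zero (u v : E) : greatCircle u v 0 = u := by simp [greatCircle]

@[simp] lemma greatCircle_one (u v : E) : greatCircle u v 1 = -u := by simp [greatCircle]

lemma greatCircle_one_sub (u v : E) (θ : ℝ) :
    greatCircle u v (1 - θ) = greatCircle (-u) v θ := by
  simp [greatCircle, mul_sub, Real.cos_pi_sub, Real.sin_pi_sub]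

abbrev SphereUnitTangent (E : Type*) [NormedAddCommGroup E] [InnerProductSpace ℝ E] :=
  {x : Metric.sphere (0 : E) 1 × E // ‖x.2‖ = 1 ∧ ⟪x.2, (x.1 : E)⟫ = 0}

def halfGreatCircle : C(SphereUnitTangent E, C(I, Metric.sphere (0 : E) 1)) :=
  ContinuousMap.curry
    { toFun := fun x : SphereUnitTangent E × I =>
        ⟨greatCircle x.1.1.1 x.1.1.2 x.2, mem_sphere_zero_iff_norm.2 <|
          norm_greatCircle (norm_eq_of_mem_sphere x.1.1.1) x.1.2.1
            (by rw [real_inner_comm]; exact x.1.2.2) _⟩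
      continuous_toFun := by unfold greatCircle; fun_prop }

lemma coe_halfGreatCircle_apply (x : SphereUnitTangent E) (t : I) :
    (halfGreatCircle x t : E) = greatCircle (x.1.1 : E) x.1.2 t := rfl

@[simp] lemma halfGreatCircle_apply_zero (x : SphereUnitTangent E) :
    halfGreatCircle x 0 = x.1.1 := Subtype.ext <| by simp [coe_halfGreatCircle_apply]

@[simp] lemma halfGreatCircle_apply_one (x : SphereUnitTangent E) :
    halfGreatCircle x 1 = -x.1.1 := Subtype.ext <| by simp [coe_halfGreatCircle_apply]

end GreatCircle

noncomputable section TangentField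

variable {E : Type*} [NormedAddCommGroup E] [InnerProductSpace ℝ E]
  (X : C(Metric.sphere (0 : E) 1, E)) (hX1 : ∀ p, ⟪X p, (p : E)⟫ = 0)
  (hX2 : ∀ p, ‖X p‖ = 1)

def antipodalArc : C(Metric.sphere (0 : E) 1, C(I, Metric.sphere (0 : E) 1)) :=
  halfGreatCircle.comp ⟨fun p => ⟨(p, X p), hX2 p, hX1 p⟩, by fun_prop⟩

lemma coe_antipodalArc_apply (q : Metric.sphere (0 : E) 1) (t : I) :
    (antipodalArc X hX1 hX2 q t : E) = greatCircle (q : E) (X q) t := rfl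

@[simp] lemma antipodalArc_apply_zero (q : Metric.sphere (0 : E) 1) :
    antipodalArc X hX1 hX2 q 0 = q :=
  halfGreatCircle_apply_zero _

@[simp] lemma antipodalArc_apply_one (q : Metric.sphere (0 : E) 1) :
    antipodalArc X hX1 hX2 q 1 = -q :=
  halfGreatCircle_apply_one _

section Rotation

variable (Y : C(Metric.sphere (0 : E) 1, E)) (hY1 : ∀ p, ⟪Y p, (p : E)⟫ = 0)
  (hY2 : ∀ p, ‖Y p‖ = 1) (hXY : ∀ p, ⟪X p, Y p⟫ = 0)

def rotatedAntipodalArc : C(I × Metric.sphere (0 : E) 1, C(I, Metric.sphere (0 : E) 1)) :=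
  halfGreatCircle.comp
    ⟨fun x => ⟨(x.2, greatCircle (X x.2) (Y x.2) x.1),
      norm_greatCircle (hX2 _) (hY2 _) (hXY _) _,
      by rw [inner_greatCircle_left, hX1, hY1]; ring⟩,
    by unfold greatCircle; fun_prop⟩

@[simp] lemma rotatedAntipodalArc_apply_zero (x : I × Metric.sphere (0 : E) 1) :
    rotatedAntipodalArc X hX1 hX2 Y hY1 hY2 hXY x 0 = x.2 :=
  halfGreatCircle_apply_zero _

@[simp] lemma rotatedAntipodalArc_apply_one (x : I × Metric.sphere (0 : E) 1) :
    rotatedAntipodalArc X hX1 hX2 Y hY1 hY2 hXY x 1 = -x.2 :=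
  halfGreatCircle_apply_one _

lemma rotatedAntipodalArc_zero (p : Metric.sphere (0 : E) 1) :
    rotatedAntipodalArc X hX1 hX2 Y hY1 hY2 hXY (0, p) = antipodalArc X hX1 hX2 p := by
  ext1 t
  exact Subtype.ext <| by simp [rotatedAntipodalArc, antipodalArc, coe_halfGreatCircle_apply]

lemma rotatedAntipodalArc_one_neg (hXodd : ∀ p, X (-p) = -(X p))
    (q : Metric.sphere (0 : E) 1) :
    rotatedAntipodalArc X hX1 hX2 Y hY1 hY2 hXY (1, -q) =
      (antipodalArc X hX1 hX2 q).comp ⟨symm, continuous_symm⟩ := by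
  ext1 t
  refine Subtype.ext ?_
  simp [rotatedAntipodalArc, antipodalArc, coe_halfGreatCircle_apply, hXodd,
    greatCircle_one_sub]

end Rotation

abbrev AntipodalPath (E : Type*) [NormedAddCommGroup E] [InnerProductSpace ℝ E] :=
  {γ : C(I, Metric.sphere (0 : E) 1) // γ 1 = -(γ 0)}

def closingPair : C(AntipodalPath E, LoopPair (Metric.sphere (0 : E) 1)) where
  toFun γ := ⟨(γ.1, antipodalArc X hX1 hX2 (-γ.1 0)), by simp [γ.2], by simp⟩
  continuous_toFun := by fun_prop

def reversedClosingPair : C(AntipodalPath E, LoopPair (Metric.sphere (0 : E) 1)) where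
  toFun γ := ⟨(γ.1, (antipodalArc X hX1 hX2 (γ.1 0)).comp ⟨symm, continuous_symm⟩),
    by simp [γ.2], by simp⟩
  continuous_toFun := by fun_prop

theorem closingPair_homotopic_reversedClosingPair
    (Y : C(Metric.sphere (0 : E) 1, E)) (hY1 : ∀ p, ⟪Y p, (p : E)⟫ = 0)
    (hY2 : ∀ p, ‖Y p‖ = 1) (hXY : ∀ p, ⟪X p, Y p⟫ = 0)
    (hXodd : ∀ p, X (-p) = -(X p)) :
    (closingPair X hX1 hX2).Homotopic (reversedClosingPair X hX1 hX2) :=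
  ⟨{ toFun := fun x =>
        ⟨(x.2.1, rotatedAntipodalArc X hX1 hX2 Y hY1 hY2 hXY (x.1, -x.2.1 0)),
          by simp [x.2.2], by simp⟩
     continuous_toFun := by fun_prop
     map_zero_left := fun γ => by simp [closingPair, rotatedAntipodalArc_zero]
     map_one_left := fun γ => by
       simp [reversedClosingPair, rotatedAntipodalArc_one_neg _ _ _ _ _ _ _ hXodd] }⟩

end TangentField

theorem stmt_18_general (n : ℕ)
    (X Y : C(Metric.sphere (0 : EuclideanSpace ℝ (Fin (n + 1))) 1,
      EuclideanSpace ℝ (Fin (n + 1))))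
    (hX1 : ∀ p, ⟪X p, (p : EuclideanSpace ℝ (Fin (n + 1)))⟫ = 0)
    (hX2 : ∀ p, ‖X p‖ = 1)
    (hXodd : ∀ p, X (-p) = -(X p))
    (hY1 : ∀ p, ⟪Y p, (p : EuclideanSpace ℝ (Fin (n + 1)))⟫ = 0)
    (hY2 : ∀ p, ‖Y p‖ = 1)
    (hXY : ∀ p, ⟪X p, Y p⟫ = 0) :
    ∃ Φ Φ' : C({γ : C(I, Metric.sphere (0 : EuclideanSpace ℝ (Fin (n + 1))) 1) //
          γ 1 = -(γ 0)},
        {γ : C(I, Metric.sphere (0 : EuclideanSpace ℝ (Fin (n + 1))) 1) // γ 0 = γ 1}),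
      -- `Φ(σ) = concat(σ, η_{−σ(0)})`
      (∀ sg (t : I),
        ((t : ℝ) ≤ 1 / 2 →
          (Φ sg).1 t = sg.1 (Set.projIcc (0 : ℝ) 1 zero_le_one (2 * (t : ℝ)))) ∧
        (1 / 2 ≤ (t : ℝ) →
          (((Φ sg).1 t : EuclideanSpace ℝ (Fin (n + 1)))) =
            Real.cos (Real.pi * (2 * (t : ℝ) - 1)) •
                (-(sg.1 0 : EuclideanSpace ℝ (Fin (n + 1)))) +
              Real.sin (Real.pi * (2 * (t : ℝ) - 1)) • X (-(sg.1 0)))) ∧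
      -- `Φ'(σ) = concat(reverse(η_{σ(0)}), σ)`
      (∀ sg (t : I),
        ((t : ℝ) ≤ 1 / 2 →
          (((Φ' sg).1 t : EuclideanSpace ℝ (Fin (n + 1)))) =
            Real.cos (Real.pi * (1 - 2 * (t : ℝ))) •
                ((sg.1 0 : EuclideanSpace ℝ (Fin (n + 1)))) +
              Real.sin (Real.pi * (1 - 2 * (t : ℝ))) • X (sg.1 0)) ∧
        (1 / 2 ≤ (t : ℝ) →
          (Φ' sg).1 t = sg.1 (Set.projIcc (0 : ℝ) 1 zero_le_one (2 * (t : ℝ) - 1)))) ∧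
      Φ.Homotopic Φ' := by
  refine ⟨loopConcat.comp (closingPair X hX1 hX2),
    loopConcat.comp (LoopPair.swap.comp (reversedClosingPair X hX1 hX2)),
    fun γ t => ⟨loopConcat_apply_of_le_half _, fun ht => ?_⟩,
    fun γ t => ⟨fun ht => ?_, loopConcat_apply_of_half_le _⟩,
    ((ContinuousMap.Homotopic.refl loopConcat).comp <|
      closingPair_homotopic_reversedClosingPair X hX1 hX2 Y hY1 hY2 hXY hXodd).trans
      (homotopic_loopConcat_swap _).symm⟩
  · have hmem : 2 * (t : ℝ) - 1 ∈ I := ⟨by linarith, by linarith [t.2.2]⟩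
    rw [ContinuousMap.comp_apply, loopConcat_apply_of_half_le _ ht]
    simp [closingPair, coe_antipodalArc_apply, greatCircle, Set.projIcc_of_mem _ hmem]
  · have hmem : 2 * (t : ℝ) ∈ I := ⟨by linarith [t.2.1], by linarith⟩
    rw [ContinuousMap.comp_apply, loopConcat_apply_of_le_half _ ht]
    simp [LoopPair.swap, reversedClosingPair, coe_antipodalArc_apply, greatCircle,
      Set.projIcc_of_mem _ hmem]

/-- Let `n` be odd and let `X, Y` be orthonormal continuous tangent
vector fields on `S^n` with `X` odd.  With `η_q(t) = cos(πt) q + sin(πt) X(q)`, the two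
maps `Φ(σ) = concat(σ, η_{−σ(0)})` and `Φ'(σ) = concat(reverse(η_{σ(0)}), σ)` are
well-defined continuous maps `P_a S^n → Λ S^n`, and `Φ` is homotopic to `Φ'`. -/
theorem stmt_18 (n : ℕ) (hn : Odd n)
    (X Y : C(Metric.sphere (0 : EuclideanSpace ℝ (Fin (n + 1))) 1,
      EuclideanSpace ℝ (Fin (n + 1))))
    (hX1 : ∀ p, ⟪X p, (p : EuclideanSpace ℝ (Fin (n + 1)))⟫ = 0)
    (hX2 : ∀ p, ‖X p‖ = 1)
    (hXodd : ∀ p, X (-p) = -(X p))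
    (hY1 : ∀ p, ⟪Y p, (p : EuclideanSpace ℝ (Fin (n + 1)))⟫ = 0)
    (hY2 : ∀ p, ‖Y p‖ = 1)
    (hXY : ∀ p, ⟪X p, Y p⟫ = 0) :
    ∃ Φ Φ' : C({γ : C(I, Metric.sphere (0 : EuclideanSpace ℝ (Fin (n + 1))) 1) //
          γ 1 = -(γ 0)},
        {γ : C(I, Metric.sphere (0 : EuclideanSpace ℝ (Fin (n + 1))) 1) // γ 0 = γ 1}),
      -- `Φ(σ) = concat(σ, η_{−σ(0)})`
      (∀ sg (t : I),
        ((t : ℝ) ≤ 1 / 2 →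
          (Φ sg).1 t = sg.1 (Set.projIcc (0 : ℝ) 1 zero_le_one (2 * (t : ℝ)))) ∧
        (1 / 2 ≤ (t : ℝ) →
          (((Φ sg).1 t : EuclideanSpace ℝ (Fin (n + 1)))) =
            Real.cos (Real.pi * (2 * (t : ℝ) - 1)) •
                (-(sg.1 0 : EuclideanSpace ℝ (Fin (n + 1)))) +
              Real.sin (Real.pi * (2 * (t : ℝ) - 1)) • X (-(sg.1 0)))) ∧
      -- `Φ'(σ) = concat(reverse(η_{σ(0)}), σ)`
      (∀ sg (t : I),
        ((t : ℝ) ≤ 1 / 2 →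
          (((Φ' sg).1 t : EuclideanSpace ℝ (Fin (n + 1)))) =
            Real.cos (Real.pi * (1 - 2 * (t : ℝ))) •
                ((sg.1 0 : EuclideanSpace ℝ (Fin (n + 1)))) +
              Real.sin (Real.pi * (1 - 2 * (t : ℝ))) • X (sg.1 0)) ∧
        (1 / 2 ≤ (t : ℝ) →
          (Φ' sg).1 t = sg.1 (Set.projIcc (0 : ℝ) 1 zero_le_one (2 * (t : ℝ) - 1)))) ∧
      Φ.Homotopic Φ' :=
  stmt_18_general n X Y hX1 hX2 hXodd hY1 hY2 hXY
end
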